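/- If u and v are orthogonal octonions, then the maps m_u and m_v on O ⊕ O anticommute: m_u ∘ m_v = -(m_v ∘ m_u). -/

import Mathlib

open Quaternion

noncomputable section

/-- The octonions, via the Cayley–Dickson construction on the quaternions. -/
def O : Type := ℍ[ℝ] × ℍ[ℝ]

namespace O

instance : AddCommGroup O := inferInstanceAs (AddCommGroup (ℍ[ℝ] × ℍ[ℝ]))
instance : Module ℝ O := inferInstanceAs (Module ℝ (ℍ[ℝ] × ℍ[ℝ]))

def mk (a b : ℍ[ℝ]) : O := (a, b)
def fst (x : O) : ℍ[ℝ] := Prod.fst x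
def snd (x : O) : ℍ[ℝ] := Prod.snd x

instance : One O := ⟨mk 1 0⟩
/-- Cayley–Dickson multiplication. -/
instance : Mul O := ⟨fun x y =>
  mk (fst x * fst y - star (snd y) * snd x) (snd y * fst x + snd x * star (fst y))⟩

/-- Octonion conjugation. -/
def conj (x : O) : O := mk (star (fst x)) (-(snd x))

/-- The standard inner product on `O ≅ ℝ⁸`. -/
def inner (x y : O) : ℝ := (Inner.inner ℝ (fst x) (fst y) : ℝ) + (Inner.inner ℝ (snd x) (snd y) : ℝ)

def normSq (x : O) : ℝ := inner x x
def norm (x : O) : ℝ := Real.sqrt (normSq x)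

/-- The map `m_u` on `O ⊕ O`, given by `m_u (x, x') = (x'·u, -x·ū)`. -/
def m (u : O) : O × O → O × O := fun p => (p.2 * u, -(p.1 * conj u))

/-- The standard inner product on `O ⊕ O`. -/
def innerPair (p q : O × O) : ℝ := inner p.1 q.1 + inner p.2 q.2

end O

/-!
Since `m_u (m_v (x, x')) = (-((x v̄) u), -((x' v) ū))`, anticommutation comes down to the
identity `(x v̄) u + (x ū) v = 2 ⟨u, v⟩ x`, the polarization of the alternative law
`(x ū) u = |u|² x`; the second component is the same identity for `ū, v̄`, which are orthogonal
because conjugation is an isometry. The identity itself is a Cayley–Dickson computation in which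
the quaternion cross terms `ā b + b̄ a` collapse to the real scalar `2 ⟨a, b⟩`.
-/

open scoped InnerProductSpace

namespace Quaternion

theorem inner_star_star (a b : ℍ) : ⟪star a, star b⟫_ℝ = ⟪a, b⟫_ℝ := by
  simp only [inner_def, star_star, re_mul, re_star, imI_star, imJ_star, imK_star]
  ring

theorem mul_star_add_mul_star (a b : ℍ) : a * star b + b * star a = ↑(2 * ⟪a, b⟫_ℝ) := by
  rw [inner_def, ← self_add_star', star_mul, star_star]

theorem star_mul_add_star_mul (a b : ℍ) : star a * b + star b * a = ↑(2 * ⟪a, b⟫_ℝ) := by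
  simpa only [star_star, inner_star_star] using mul_star_add_mul_star (star a) (star b)

end Quaternion

namespace O

@[simp] lemma fst_mul (x y : O) : fst (x * y) = fst x * fst y - star (snd y) * snd x := rfl
@[simp] lemma snd_mul (x y : O) : snd (x * y) = snd y * fst x + snd x * star (fst y) := rfl
@[simp] lemma fst_conj (x : O) : fst (conj x) = star (fst x) := rfl
@[simp] lemma snd_conj (x : O) : snd (conj x) = -snd x := rfl
@[simp] lemma fst_neg (x : O) : fst (-x) = -fst x := rfl
@[simp] lemma snd_neg (x : O) : snd (-x) = -snd x := rfl
@[simp] lemma fst_add (x y : O) : fst (x + y) = fst x + fst y := rfl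
@[simp] lemma snd_add (x y : O) : snd (x + y) = snd x + snd y := rfl
@[simp] lemma fst_smul (r : ℝ) (x : O) : fst (r • x) = r • fst x := rfl
@[simp] lemma snd_smul (r : ℝ) (x : O) : snd (r • x) = r • snd x := rfl

@[ext] lemma ext {x y : O} (h₁ : fst x = fst y) (h₂ : snd x = snd y) : x = y := Prod.ext h₁ h₂

lemma inner_def (x y : O) : inner x y = ⟪fst x, fst y⟫_ℝ + ⟪snd x, snd y⟫_ℝ := rfl

@[simp] lemma conj_conj (x : O) : conj (conj x) = x := by
  ext1 <;> simp

lemma inner_conj_conj (x y : O) : inner (conj x) (conj y) = inner x y := by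
  simp only [inner_def, fst_conj, snd_conj, Quaternion.inner_star_star, inner_neg_neg]

protected lemma neg_mul (x y : O) : -x * y = -(x * y) := by
  ext1 <;> simp only [fst_mul, snd_mul, fst_neg, snd_neg, neg_mul, mul_neg] <;> abel

lemma mul_conj_mul_add_mul_conj_mul (x u v : O) :
    x * conj v * u + x * conj u * v = (2 * inner u v) • x := by
  ext1
  · calc fst (x * conj v * u + x * conj u * v)
          = fst x * (star (fst v) * fst u + star (fst u) * fst v)
            + (star (snd u) * snd v + star (snd v) * snd u) * fst x := by
            simp only [fst_add, fst_mul, snd_mul, fst_conj, snd_conj, star_neg, star_star]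
            noncomm_ring
        _ = fst ((2 * inner u v) • x) := by
            rw [star_mul_add_star_mul, star_mul_add_star_mul, ← coe_commutes, ← add_mul,
              ← coe_add, coe_mul_eq_smul, real_inner_comm (fst u), fst_smul, inner_def, mul_add]
  · calc snd (x * conj v * u + x * conj u * v)
          = snd x * (fst v * star (fst u) + fst u * star (fst v))
            + (snd u * star (snd v) + snd v * star (snd u)) * snd x := by
            simp only [snd_add, fst_mul, snd_mul, fst_conj, snd_conj, star_neg, star_star]
            noncomm_ring
        _ = snd ((2 * inner u v) • x) := by
            rw [mul_star_add_mul_star, mul_star_add_mul_star, ← coe_commutes, ← add_mul,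
              ← coe_add, coe_mul_eq_smul, real_inner_comm (fst u), snd_smul, inner_def, mul_add]

lemma mul_conj_mul_eq_neg_of_inner_eq_zero {u v : O} (h : inner u v = 0) (x : O) :
    x * conj v * u = -(x * conj u * v) := by
  rw [eq_neg_iff_add_eq_zero, mul_conj_mul_add_mul_conj_mul, h, mul_zero, zero_smul]

end O

/-- For orthogonal octonions `u, v`, the maps `m_u` and `m_v` anticommute. -/
theorem m_anticommute (u v : O) (h : O.inner u v = 0) :
    ∀ p : O × O, O.m u (O.m v p) = -(O.m v (O.m u p)) := by
  intro p
  have h' : O.inner (O.conj u) (O.conj v) = 0 := by rwa [O.inner_conj_conj]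
  refine Prod.ext ?_ ?_
  · simp only [O.m, Prod.fst_neg, O.neg_mul, O.mul_conj_mul_eq_neg_of_inner_eq_zero h]
  · simp only [O.m, Prod.snd_neg, neg_neg, neg_eq_iff_eq_neg]
    simpa only [O.conj_conj] using O.mul_conj_mul_eq_neg_of_inner_eq_zero h' p.2
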